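/- arXiv:2011.05198 — 2 statements merged into one kernel-verified Lean document; each statement's English description precedes it below -/
import Mathlib

section
/- The idempotent e = (1/2)(1⊗1 + (1/p₀)·j⊗√p₀) is fixed by the involution x ↦ x† = i⁻¹x̄i extended M-linearly to B ⊗_ℚ M, i.e. e† = e. -/
open Quaternion

/-! The involution `x ↦ i⁻¹ x̄ i` only negates the `i`-coordinate, so it fixes `e`,
which lies in the span of `1` and `j`. -/

namespace QuaternionAlgebra

variable {R : Type*} [CommRing R] {c₁ c₂ : R}

theorem i_mul_star_mul_i (x : ℍ[R, c₁, c₂]) :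
    (⟨0, 1, 0, 0⟩ : ℍ[R, c₁, c₂]) * star x * ⟨0, 1, 0, 0⟩ = c₁ • ⟨x.re, -x.imI, x.imJ, x.imK⟩ := by
  ext <;> simp

end QuaternionAlgebra

theorem stmt_2_general (M : Type*) [Field M]
    (pN p₀ : M) (hpN : pN ≠ 0)
    (s : M)
    (ι : ℍ[M, -pN, p₀]) (hι : ι = ⟨0, 1, 0, 0⟩)
    (dag : ℍ[M, -pN, p₀] → ℍ[M, -pN, p₀])
    (hdag : ∀ x, dag x = (-pN)⁻¹ • (ι * star x * ι))
    (e : ℍ[M, -pN, p₀])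
    (he : e = (1 / 2 : M) • (1 + (s / p₀) • (⟨0, 0, 1, 0⟩ : ℍ[M, -pN, p₀]))) :
    dag e = e := by
  subst hι he
  rw [hdag, QuaternionAlgebra.i_mul_star_mul_i, smul_smul, inv_mul_cancel₀ (neg_ne_zero.mpr hpN),
    one_smul]
  ext <;> simp

/-- The idempotent `e = (1/2)(1⊗1 + (1/p₀)·j⊗√p₀)` is fixed by the involution
`x ↦ x† = i⁻¹·x̄·i` extended `M`-linearly to `B ⊗_ℚ M`, i.e. `e† = e`.
We model `B ⊗_ℚ M` as `ℍ[M, -pN⁻, p₀]` over the field `M = ℚ(√p₀)`, with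
`x† = (-pN⁻)⁻¹ • (i * star x * i)` (as `i⁻¹ = (-pN⁻)⁻¹ • i`). -/
theorem stmt_2 (M : Type*) [Field M] [Algebra ℚ M]
    (pN p₀ : M) (hpN : pN ≠ 0) (hp₀ : p₀ ≠ 0)
    (s : M) (hs : s ^ 2 = p₀)
    (ι : ℍ[M, -pN, p₀]) (hι : ι = ⟨0, 1, 0, 0⟩)
    (dag : ℍ[M, -pN, p₀] → ℍ[M, -pN, p₀])
    (hdag : ∀ x, dag x = (-pN)⁻¹ • (ι * star x * ι))
    (e : ℍ[M, -pN, p₀])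
    (he : e = (1 / 2 : M) • (1 + (s / p₀) • (⟨0, 0, 1, 0⟩ : ℍ[M, -pN, p₀]))) :
    dag e = e :=
  stmt_2_general M pN p₀ hpN s ι hι dag hdag e he
end

section
/- For the second-order structure above, define G_j(z) = ⟨F(z), ω_can^j η_can^{n-j}⟩ ⊗ ω_can^{n-2j} where ω_can, η_can satisfy ⟨ω_can, η_can⟩ = 1, ∇(ω_can) = (-ω_can/(z*-z) + η_can) ⊗ dz, ∇(η_can) = -ω_can⊗dz*/(z*-z)² + η_can⊗dz/(z*-z), and ∇(F) = f(z)dz ⊗ ω_can^n. Then applying the connection, using the Kodaira-Spencer identification dz ↔ ω_can², and then the projection Ψ killing η_can and dz*, one obtains Θ_p(G_j) = j·G_{j-1} for 1 ≤ j ≤ n, and Θ_p(G_0) = f(z) ⊗ ω_can^{n+2}. -/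
/-!
Differentiating `g_j = ⟨F, ω^j η^(n-j)⟩` against the pairing gives two contributions.
The term `⟨∇F, ω^j η^(n-j)⟩ = f ⟨ω^n, ω^j η^(n-j)⟩` is `f` for `j = 0` and vanishes otherwise.
In the other term, the Leibniz rule turns `∇(ω^j η^m)` into the weight term
`(j - m) w ω^j η^m` plus `j ω^(j-1) η^(m+1)`; for `m = n - j` the weight term is exactly what
the correction `(n - 2j) w` in `Θ_{n-2j}` cancels, leaving `j g_(j-1)`.
-/

section LeibnizRule

variable {S M : Type*} [CommRing S] [AddCommGroup M] [Module S M] {d : S → M}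

theorem leibniz_one (hd : ∀ x y, d (x * y) = x • d y + y • d x) : d 1 = 0 := by
  simpa using hd 1 1

theorem leibniz_pow_succ (hd : ∀ x y, d (x * y) = x • d y + y • d x) (x : S) (m : ℕ) :
    d (x ^ (m + 1)) = (((m : S) + 1) * x ^ m) • d x := by
  induction m with
  | zero => simp
  | succ m ih =>
    rw [pow_succ' x (m + 1), hd, ih, smul_smul, ← add_smul]
    push_cast
    ring_nf

end LeibnizRule

section Monomials

variable {A S : Type*} [CommRing A] [CommRing S] [Algebra A S] {d : S → S}

theorem leibniz_pow_of_eq_smul (hd : ∀ x y, d (x * y) = x • d y + y • d x) {x : S} {a : A}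
    (hx : d x = a • x) (m : ℕ) : d (x ^ m) = ((m : A) * a) • x ^ m := by
  cases m with
  | zero => simp [leibniz_one hd]
  | succ m =>
    rw [leibniz_pow_succ hd, hx]
    simp only [smul_eq_mul, Algebra.smul_def, map_mul, map_natCast, Nat.cast_succ, map_add,
      map_one]
    ring

theorem leibniz_monomial (hd : ∀ x y, d (x * y) = x • d y + y • d x) {ω η : S} {w : A}
    (hω : d ω = w • ω + η) (hη : d η = -(w • η)) (j m : ℕ) :
    d (ω ^ j * η ^ m) =
      (((j : A) - m) * w) • (ω ^ j * η ^ m) + (j : A) • (ω ^ (j - 1) * η ^ (m + 1)) := by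
  rw [hd, leibniz_pow_of_eq_smul hd (a := -w) (by rw [hη, neg_smul])]
  cases j with
  | zero => simp [leibniz_one hd, sub_eq_add_neg]
  | succ k =>
    rw [leibniz_pow_succ hd, hω]
    simp only [smul_eq_mul, Algebra.smul_def, map_mul, map_natCast, Nat.cast_succ, map_add,
      map_one, map_sub, map_neg, Nat.add_sub_cancel]
    ring

theorem theta_pair_monomial (hd : ∀ x y, d (x * y) = x • d y + y • d x) {ω η : S} {w : A}
    (hω : d ω = w • ω + η) (hη : d η = -(w • η)) (Pair : S →ₗ[A] S →ₗ[A] A) {D : A → A}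
    (hPairD : ∀ x y, D (Pair x y) = Pair (d x) y + Pair x (d y)) {n : ℕ} {F : S} {f : A}
    (hF : d F = f • ω ^ n)
    (hOrth : ∀ j ≤ n, Pair (ω ^ n) (ω ^ j * η ^ (n - j)) = if j = 0 then 1 else 0)
    {j : ℕ} (hj : j ≤ n) :
    D (Pair F (ω ^ j * η ^ (n - j))) + ((n : A) - 2 * j) * (w * Pair F (ω ^ j * η ^ (n - j))) =
      (if j = 0 then f else 0) + j * Pair F (ω ^ (j - 1) * η ^ (n - j + 1)) := by
  rw [hPairD, hF, leibniz_monomial hd hω hη, map_smul, LinearMap.smul_apply, hOrth j hj,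
    map_add, map_smul, map_smul, Nat.cast_sub hj]
  split_ifs <;> simp only [smul_eq_mul] <;> ring

end Monomials

theorem stmt_8_general (A : Type*) [CommRing A]
    (S : Type*) [CommRing S] [Algebra A S]
    (D : A → A) (w : A)
    (ω η : S) (nabla : S → S × S)
    (hLeib : ∀ x y : S, nabla (x * y) = x • nabla y + y • nabla x)
    (hω : nabla ω = (w • ω + η, 0))
    (hη : nabla η = (-(w • η), -((w * w) • ω)))
    (Pair : S →ₗ[A] S →ₗ[A] A)
    (hPairD : ∀ x y : S, D (Pair x y) = Pair (nabla x).1 y + Pair x (nabla y).1)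
    (n : ℕ) (F : S) (f : A)
    (hF : nabla F = (f • ω ^ n, 0))
    (hOrth : ∀ j ≤ n, Pair (ω ^ n) (ω ^ j * η ^ (n - j)) = if j = 0 then 1 else 0)
    (g : ℕ → A) (hg : ∀ j : ℕ, g j = Pair F (ω ^ j * η ^ (n - j)))
    (Θ : ℤ → A → A) (hΘ : ∀ (k : ℤ) (x : A), Θ k x = D x + (k : A) * (w * x)) :
    (∀ j : ℕ, 1 ≤ j → j ≤ n →
      Θ ((n : ℤ) - 2 * (j : ℤ)) (g j) = (j : A) * g (j - 1)) ∧
    Θ (n : ℤ) (g 0) = f := by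
  have hd : ∀ x y : S, (nabla (x * y)).1 = x • (nabla y).1 + y • (nabla x).1 := fun x y => by
    simp [hLeib]
  have step := fun j (hj : j ≤ n) => theta_pair_monomial hd (by rw [hω]) (by rw [hη]) Pair
    hPairD (by rw [hF]) hOrth hj
  refine ⟨fun j hj1 hjn => ?_, ?_⟩
  · have hidx : n - j + 1 = n - (j - 1) := by omega
    rw [hΘ, hg, hg, ← hidx]
    push_cast
    rw [step j hjn, if_neg (by omega), zero_add]
  · simpa [hΘ, hg] using step 0 (Nat.zero_le n)

/-- (the computational core of Theorem 8.1 of the paper).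
Abstract setting: `S` is the symmetric algebra (a commutative `A`-algebra) containing the
canonical sections `ω = ω_can` and `η = η_can`, with symplectic pairing `Pair` satisfying
`⟨ω^n, η^n⟩ = 1` (and orthogonality in the other weights), and a connection
`nabla : S → S × S` (components along `dz` and `dz*`) satisfying the Leibniz rule,
with the displayed values `nablaω = (ω/(z-z*) + η)·dz`, `nablaη = η/(z-z*)·dz·(-1)·…` i.e.
`nablaω = (w•ω + η, 0)`, `nablaη = (-(w•η), -((w*w)•ω))` where `w = 1/(z - z*)`, and
`nablaF = f·dz ⊗ ω^n`.  Setting `G_j = ⟨F, ω^j η^{n-j}⟩ ⊗ ω^{n-2j}`, with scalar part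
`g j = Pair F (ω^j η^{n-j})`, and letting `Θ_p` be `Ψ ∘ KS⁻¹ ∘ nabla` — which on a scalar of
weight `k` is `Θ k x = D x + k·x/(z - z*)` (the Kodaira–Spencer identification `dz ↔ ω²`
followed by the projection `Ψ` killing `η_can` and `dz*`) — one obtains
`Θ_p(G_j) = j·G_{j-1}` for `1 ≤ j ≤ n` and `Θ_p(G_0) = f ⊗ ω^{n+2}`. -/
theorem stmt_8 (A : Type*) [CommRing A]
    (S : Type*) [CommRing S] [Algebra A S]
    (D Ds : A → A) (z zs w : A) (hw : w * (z - zs) = 1)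
    (ω η : S) (nabla : S → S × S)
    (hadd : ∀ x y : S, nabla (x + y) = nabla x + nabla y)
    (hLeib : ∀ x y : S, nabla (x * y) = x • nabla y + y • nabla x)
    (hscal : ∀ a : A, nabla (algebraMap A S a) = (algebraMap A S (D a), algebraMap A S (Ds a)))
    (hω : nabla ω = (w • ω + η, 0))
    (hη : nabla η = (-(w • η), -((w * w) • ω)))
    (Pair : S →ₗ[A] S →ₗ[A] A)
    (hPairD : ∀ x y : S, D (Pair x y) = Pair (nabla x).1 y + Pair x (nabla y).1)
    (n : ℕ) (F : S) (f : A)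
    (hF : nabla F = (f • ω ^ n, 0))
    (hOrth : ∀ j ≤ n, Pair (ω ^ n) (ω ^ j * η ^ (n - j)) = if j = 0 then 1 else 0)
    (g : ℕ → A) (hg : ∀ j : ℕ, g j = Pair F (ω ^ j * η ^ (n - j)))
    (Θ : ℤ → A → A) (hΘ : ∀ (k : ℤ) (x : A), Θ k x = D x + (k : A) * (w * x)) :
    (∀ j : ℕ, 1 ≤ j → j ≤ n →
      Θ ((n : ℤ) - 2 * (j : ℤ)) (g j) = (j : A) * g (j - 1)) ∧
    Θ (n : ℤ) (g 0) = f :=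
  stmt_8_general A S D w ω η nabla hLeib hω hη Pair hPairD n F f hF hOrth g hg Θ hΘ
end
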